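/- With E(a,b,c) the block derangement number, the recurrence 2a·E(a-1,b,c) + (a-b+c)·E(a,b,c) + (c-a-b-1)·E(a,b+1,c) = 0 holds for all natural numbers a ≥ 1 and b, c ≥ 0. -/

import Mathlib

/-!
With integer lower indices (and `C(n, m) = 0` outside `0 ≤ m ≤ n`) the summand
`C(a,k) C(b,c-a+k) C(c,b-k)` makes sense for every ordering of `a, b, c` and has finite
support. The reflections `k ↦ a - k` and `k ↦ b - k` show that its sum is invariant under
swapping `b, c` and under swapping `a, c`, so this single sum equals `E(a,b,c)` in all cases.

The recurrence is then proved by creative telescoping: the combination of summands it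
describes is the forward difference `G(k+1) - G(k)` of an explicit certificate `G`, which
reduces to the contiguous relations of binomial coefficients, and `G` vanishes at both ends
of the summation range.
-/

open Finset

/-- The binomial sum for block derangements of three players,
when the third argument is the largest. The sum is automatically `0`
when the triangle inequality `c ≤ a + b` fails. -/
def Eaux (a b c : ℕ) : ℤ :=
  ∑ k ∈ Finset.range (a + b - c + 1),
    (a.choose k : ℤ) * (b.choose (c - a + k)) * (c.choose (b - k))

/-- The block derangement number `E(a,b,c)`: the binomial sum applied with the
largest argument placed last. -/
def E3 (a b c : ℕ) : ℤ :=
  if a ≤ c ∧ b ≤ c then Eaux a b c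
  else if a ≤ b ∧ c ≤ b then Eaux a c b
  else Eaux b c a

def intChoose (n : ℕ) : ℤ → ℤ
  | (k : ℕ) => n.choose k
  | Int.negSucc _ => 0

@[simp, norm_cast]
lemma intChoose_natCast (n k : ℕ) : intChoose n k = n.choose k := rfl

@[simp]
lemma intChoose_zero (n : ℕ) : intChoose n 0 = 1 := by
  simpa using intChoose_natCast n 0

lemma intChoose_of_neg (n : ℕ) {m : ℤ} (h : m < 0) : intChoose n m = 0 := by
  cases m with
  | ofNat k => exact absurd h (by simp)
  | negSucc k => rfl

lemma intChoose_of_lt (n : ℕ) {m : ℤ} (h : n < m) : intChoose n m = 0 := by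
  lift m to ℕ using by omega
  simp [Nat.choose_eq_zero_of_lt (by omega : n < m)]

lemma intChoose_succ_succ (n : ℕ) (m : ℤ) :
    intChoose (n + 1) (m + 1) = intChoose n m + intChoose n (m + 1) := by
  rcases lt_or_ge m 0 with h | h
  · rcases eq_or_lt_of_le (Int.lt_iff_add_one_le.1 h) with h' | h'
    · simp [intChoose_of_neg n h, h']
    · simp [intChoose_of_neg _ h, intChoose_of_neg _ h']
  · lift m to ℕ using h
    exact_mod_cast Nat.choose_succ_succ n m

lemma succ_mul_intChoose_succ (n : ℕ) (m : ℤ) :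
    (m + 1) * intChoose n (m + 1) = (n - m) * intChoose n m := by
  rcases lt_or_ge m 0 with h | h
  · rcases eq_or_lt_of_le (Int.lt_iff_add_one_le.1 h) with h' | h'
    · simp [intChoose_of_neg n h, h']
    · simp [intChoose_of_neg _ h, intChoose_of_neg _ h']
  · lift m to ℕ using h
    rcases le_or_gt m n with hm | hm
    · have h := congrArg (Nat.cast : ℕ → ℤ) (Nat.choose_succ_right_eq n m)
      push_cast [hm] at h
      simp only [← Nat.cast_add_one, intChoose_natCast]
      push_cast
      linear_combination h
    · simp [Nat.choose_eq_zero_of_lt hm, intChoose_of_lt n (m := m + 1) (by omega)]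

lemma succ_mul_intChoose (n : ℕ) (m : ℤ) :
    (n + 1) * intChoose n m = (n + 1 - m) * intChoose (n + 1) m := by
  rcases lt_or_ge m 0 with h | h
  · simp [intChoose_of_neg _ h]
  · lift m to ℕ using h
    rcases le_or_gt m (n + 1) with hm | hm
    · have h := congrArg (Nat.cast : ℕ → ℤ) (Nat.choose_mul_succ_eq n m)
      push_cast [hm] at h
      simp only [← Nat.cast_add_one, intChoose_natCast]
      push_cast
      linear_combination h
    · simp [Nat.choose_eq_zero_of_lt hm, Nat.choose_eq_zero_of_lt (Nat.lt_of_succ_lt hm)]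

lemma intChoose_sub (n : ℕ) (m : ℤ) : intChoose n (n - m) = intChoose n m := by
  rcases lt_or_ge m 0 with h | h
  · rw [intChoose_of_neg n h, intChoose_of_lt n (by omega)]
  rcases le_or_gt m n with hm | hm
  · lift m to ℕ using h
    rw [← Nat.cast_sub (by omega), intChoose_natCast, intChoose_natCast,
      Nat.choose_symm (by omega)]
  · rw [intChoose_of_neg n (by omega), intChoose_of_lt n hm]

def blockTerm (a b c k : ℕ) : ℤ :=
  intChoose a k * intChoose b (c + k - a) * intChoose c (b - k)

def blockSum (a b c : ℕ) : ℤ :=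
  ∑ k ∈ range (min a b + 1), blockTerm a b c k

lemma blockTerm_eq_zero_of_lt_left {a b c k : ℕ} (h : a < k) : blockTerm a b c k = 0 := by
  rw [blockTerm, intChoose_of_lt a (by exact_mod_cast h), zero_mul, zero_mul]

lemma blockTerm_eq_zero_of_lt_right {a b c k : ℕ} (h : b < k) : blockTerm a b c k = 0 := by
  rw [blockTerm, intChoose_of_neg c (by omega), mul_zero]

lemma blockSum_eq_sum_range {a b c N : ℕ} (hN : min a b < N) :
    blockSum a b c = ∑ k ∈ range N, blockTerm a b c k := by
  refine sum_subset (range_subset_range.2 hN) fun k _ hk => ?_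
  rcases min_choice a b with h | h <;> simp only [mem_range, h, not_lt] at hk
  · exact blockTerm_eq_zero_of_lt_left hk
  · exact blockTerm_eq_zero_of_lt_right hk

lemma blockSum_swap_bc (a b c : ℕ) : blockSum a b c = blockSum a c b := by
  rw [blockSum_eq_sum_range (N := a + 1) (by omega), blockSum_eq_sum_range (N := a + 1) (by omega),
    ← sum_range_reflect]
  refine sum_congr rfl fun k hk => ?_
  have hka : k ≤ a := Nat.lt_succ_iff.1 (mem_range.1 hk)
  rw [blockTerm, blockTerm, Nat.add_sub_cancel, Nat.cast_sub hka, intChoose_sub]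
  ring_nf

lemma blockSum_swap_ac (a b c : ℕ) : blockSum a b c = blockSum c b a := by
  rw [blockSum_eq_sum_range (N := b + 1) (by omega), blockSum_eq_sum_range (N := b + 1) (by omega),
    ← sum_range_reflect]
  refine sum_congr rfl fun k hk => ?_
  have hkb : k ≤ b := Nat.lt_succ_iff.1 (mem_range.1 hk)
  rw [blockTerm, blockTerm, Nat.add_sub_cancel, Nat.cast_sub hkb, ← intChoose_sub b]
  ring_nf

lemma Eaux_eq_blockSum {a b c : ℕ} (h : a ≤ c) : Eaux a b c = blockSum a b c := by
  have htail : ∀ k ∈ range (a + b + 1), k ∉ range (a + b - c + 1) →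
      blockTerm a b c k = 0 := by
    intro k _ hk
    rw [mem_range, not_lt] at hk
    rw [blockTerm, intChoose_of_lt b (by omega), mul_zero, zero_mul]
  rw [blockSum_eq_sum_range (N := a + b + 1) (by omega), ← sum_subset (by simp) htail]
  refine sum_congr rfl fun k hk => ?_
  have hkb : k ≤ b := by rw [mem_range] at hk; omega
  rw [blockTerm, show (c + k - a : ℤ) = (c - a + k : ℕ) by omega, ← Nat.cast_sub hkb]
  simp only [intChoose_natCast]

lemma E3_eq_blockSum (a b c : ℕ) : E3 a b c = blockSum a b c := by
  unfold E3
  split_ifs with habc hacb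
  · exact Eaux_eq_blockSum habc.1
  · rw [Eaux_eq_blockSum hacb.1, blockSum_swap_bc]
  · rw [Eaux_eq_blockSum (by omega : b ≤ a), blockSum_swap_ac, blockSum_swap_bc]

def recurrenceCertificate (a b c k : ℕ) : ℤ :=
  intChoose (a + 1) (k - 1) *
    (intChoose b (c + k - a - 2) *
        (((k : ℤ) - b + c + 1) * intChoose c (b - k - 1) - c * intChoose c (b - k)
          + (2 * (c : ℤ) - a - b - 1) * intChoose c (b - k + 1))
      + (2 * (c : ℤ) + 2) * intChoose b (c + k - a - 1) * intChoose c (b - k + 1))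

lemma blockTerm_recurrence_eq_sub (a b c k : ℕ) :
    2 * ((a : ℤ) + 1) * blockTerm a b c k + ((a : ℤ) + 1 - b + c) * blockTerm (a + 1) b c k
      + ((c : ℤ) - a - b - 2) * blockTerm (a + 1) (b + 1) c k
      = recurrenceCertificate a b c (k + 1) - recurrenceCertificate a b c k := by
  have h1 := succ_mul_intChoose_succ (a + 1) (k - 1)
  have h2 := succ_mul_intChoose a k
  have h3 := succ_mul_intChoose_succ b (c + k - a - 2)
  have h4 := succ_mul_intChoose_succ b (c + k - a - 1)
  have h5 := intChoose_succ_succ b (c + k - a - 2)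
  have h6 := succ_mul_intChoose_succ c (b - k - 2)
  have h7 := succ_mul_intChoose_succ c (b - k - 1)
  have h8 := succ_mul_intChoose_succ c (b - k)
  simp only [blockTerm, recurrenceCertificate]
  push_cast at h1 ⊢
  -- `ring_nf` also normalizes the arguments of `intChoose`, identifying shifted indices.
  linear_combination (norm := ring_nf)
    (-2 * intChoose b (c + k - a - 1) - intChoose b (c + k - a - 2)) * intChoose c (b - k + 1) * h1
    + 2 * intChoose b (c + k - a) * intChoose c (b - k) * h2
    + (intChoose (a + 1) k + 2 * intChoose (a + 1) (k - 1)) * intChoose c (b - k + 1) * h3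
    - 2 * intChoose (a + 1) k * intChoose c (b - k) * h4
    + ((c : ℤ) - a - b - 2) * intChoose (a + 1) k * intChoose c (b - k + 1) * h5
    + intChoose (a + 1) k * intChoose b (c + k - a - 1) * h6
    - (intChoose (a + 1) k * intChoose b (c + k - a - 1)
      + intChoose (a + 1) (k - 1) * intChoose b (c + k - a - 2)) * h7
    + (intChoose (a + 1) (k - 1) * intChoose b (c + k - a - 2)
      - intChoose (a + 1) k * intChoose b (c + k - a - 1)) * h8

lemma blockSum_recurrence (a b c : ℕ) :
    2 * ((a : ℤ) + 1) * blockSum a b c + ((a : ℤ) + 1 - b + c) * blockSum (a + 1) b c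
      + ((c : ℤ) - a - b - 2) * blockSum (a + 1) (b + 1) c = 0 := by
  set N := a + b + c + 3
  have hstart : recurrenceCertificate a b c 0 = 0 := by
    simp [recurrenceCertificate, intChoose_of_neg]
  have hend : recurrenceCertificate a b c N = 0 := by
    simp only [recurrenceCertificate, intChoose_of_lt b (m := c + N - a - 2) (by omega),
      intChoose_of_lt b (m := c + N - a - 1) (by omega)]
    ring
  rw [blockSum_eq_sum_range (N := N) (by omega), blockSum_eq_sum_range (N := N) (by omega),
    blockSum_eq_sum_range (N := N) (by omega), mul_sum, mul_sum, mul_sum, ← sum_add_distrib,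
    ← sum_add_distrib]
  simp only [blockTerm_recurrence_eq_sub]
  rw [sum_range_sub, hstart, hend, sub_zero]

theorem stmt10 (a b c : ℕ) (ha : 1 ≤ a) :
    2 * (a : ℤ) * E3 (a - 1) b c + ((a : ℤ) - b + c) * E3 a b c +
      ((c : ℤ) - a - b - 1) * E3 a (b + 1) c = 0 := by
  obtain ⟨a, rfl⟩ := Nat.exists_eq_add_of_le' ha
  simp only [Nat.add_sub_cancel, E3_eq_blockSum]
  push_cast
  linear_combination blockSum_recurrence a b c
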